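/- If Q is a quasi-simple subnormal subgroup of a finite group G with Φ(G) = 1, then Q is simple (in particular Z(Q) = 1). -/

import Mathlib

/-!
In any group `Z(G) ∩ G' ≤ Φ(G)`: a maximal subgroup `M` not containing `Z(G) ∩ G'` satisfies
`G = M Z(G)`, whence `G' = M' ≤ M`. For a quasi-simple `Q` this gives `Z(Q) ≤ Φ(Q)`.

On the other hand `Φ(N) ≤ Φ(G)` for a normal subgroup `N` of a finite group `G`: `Φ(N)` is
characteristic in `N`, hence normal in `G`, so if it escaped a maximal subgroup `M` then
`N = (N ∩ M) Φ(N)`, and the non-generating property of `Φ(N)` would force `N ≤ M`. Iterating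
along a subnormal series gives `Φ(Q) ≤ Φ(G) = 1`, so `Z(Q) = 1` and `Q ≅ Q / Z(Q)` is simple.
-/

open Subgroup

/-- A subgroup `H` of `G` is subnormal if there is a chain of subgroups from `H` to `G`,
each normal in the next. -/
def IsSubnormal {G : Type*} [Group G] (H : Subgroup G) : Prop :=
  ∃ (n : ℕ) (c : ℕ → Subgroup G), c 0 = H ∧ c n = ⊤ ∧
    ∀ i, c i ≤ c (i + 1) ∧ ((c i).subgroupOf (c (i + 1))).Normal

/-- A group is quasi-simple if it is perfect and its central quotient is simple. -/
def IsQuasiSimple (Q : Type*) [Group Q] : Prop :=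
  commutator Q = ⊤ ∧ IsSimpleGroup (Q ⧸ Subgroup.center Q)

/-- A component of `G` is a subnormal quasi-simple subgroup. -/
def IsComponent {G : Type*} [Group G] (Q : Subgroup G) : Prop :=
  _root_.IsSubnormal Q ∧ IsQuasiSimple Q

/-- The layer `E(G)`: the subgroup generated by all components of `G`. -/
def layer (G : Type*) [Group G] : Subgroup G :=
  Subgroup.closure {x | ∃ Q : Subgroup G, IsComponent Q ∧ x ∈ Q}

/-- The Fitting subgroup `F(G)`: the subgroup generated by all nilpotent normal
subgroups of `G`. -/
def fitting (G : Type*) [Group G] : Subgroup G :=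
  Subgroup.normalClosure {x | ∃ N : Subgroup G, N.Normal ∧ Group.IsNilpotent N ∧ x ∈ N}

/-- The generalised Fitting subgroup `F*(G) = F(G) E(G)`. -/
def genFitting (G : Type*) [Group G] : Subgroup G := fitting G ⊔ layer G

/-- `N` is a minimal normal subgroup of `G`. -/
def IsMinimalNormal {G : Type*} [Group G] (N : Subgroup G) : Prop :=
  N.Normal ∧ N ≠ ⊥ ∧ ∀ M : Subgroup G, M.Normal → M ≤ N → M ≠ ⊥ → M = N

/-- The socle of `G`: the subgroup generated by all minimal normal subgroups of `G`. -/
def socle (G : Type*) [Group G] : Subgroup G :=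
  Subgroup.closure {x | ∃ N : Subgroup G, IsMinimalNormal N ∧ x ∈ N}

/-- `Soc(Z(G))`, viewed as a subgroup of `G`. -/
def centerSocle (G : Type*) [Group G] : Subgroup G :=
  (socle (Subgroup.center G)).map (Subgroup.center G).subtype

/-- The class `B` of groups all of whose quotients have trivial Frattini subgroup. -/
def classB (G : Type*) [Group G] : Prop :=
  ∀ (N : Subgroup G) [N.Normal], frattini (G ⧸ N) = ⊥

open scoped commutatorElement Pointwise

section Frattini

variable {G : Type*} [Group G]

theorem commutatorElement_mul_center_mul_center {a b z w : G} (hz : z ∈ center G)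
    (hw : w ∈ center G) : ⁅a * z, b * w⁆ = ⁅a, b⁆ := by
  have hzc (c : G) : ⁅z, c⁆ = 1 :=
    commutatorElement_eq_one_iff_mul_comm.mpr (mem_center_iff.mp hz c).symm
  have hcw (c : G) : ⁅c, w⁆ = 1 :=
    commutatorElement_eq_one_iff_mul_comm.mpr (mem_center_iff.mp hw c)
  rw [commutatorElement_mul_left_eq_conj_mul, hzc, commutatorElement_mul_right_eq_mul_conj, hcw]
  group

theorem commutator_le_of_sup_center_eq_top {M : Subgroup G} (h : M ⊔ center G = ⊤) :
    commutator G ≤ M := by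
  have hmem (g : G) : g ∈ (M : Set G) * (center G : Set G) :=
    mul_normal M (center G) ▸ h ▸ mem_top g
  rw [_root_.commutator_def, commutator_le]
  rintro g - h -
  obtain ⟨m, hm, z, hz, rfl⟩ := hmem g
  obtain ⟨n, hn, w, hw, rfl⟩ := hmem h
  rw [commutatorElement_mul_center_mul_center hz hw, commutatorElement_def]
  exact M.mul_mem (M.mul_mem (M.mul_mem hm hn) (M.inv_mem hm)) (M.inv_mem hn)

theorem center_inf_commutator_le_frattini : center G ⊓ commutator G ≤ frattini G := by
  refine le_iInf₂ fun M hM ↦ ?_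
  by_contra hle
  have hsup : M ⊔ center G = ⊤ :=
    top_unique (hM.2 _ (left_lt_sup.mpr hle) ▸ sup_le_sup_left inf_le_left M)
  exact hle (inf_le_right.trans (commutator_le_of_sup_center_eq_top hsup))

theorem map_frattini_mulEquiv {H : Type*} [Group H] (e : G ≃* H) :
    (frattini G).map e.toMonoidHom = frattini H :=
  e.mapSubgroup.map_radical

theorem inf_sup_le_inf_sup_of_normal {N M P : Subgroup G} [P.Normal] (hPN : P ≤ N) :
    N ⊓ (M ⊔ P) ≤ N ⊓ M ⊔ P := by
  rintro x ⟨hxN, hxMP⟩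
  obtain ⟨m, hm, p, hp, rfl⟩ : x ∈ (M : Set G) * (P : Set G) := mul_normal M P ▸ hxMP
  have hmN : m ∈ N := by simpa using N.mul_mem hxN (N.inv_mem (hPN hp))
  exact mul_mem_sup ⟨hmN, hm⟩ hp

theorem map_subtype_frattini_le (N : Subgroup G) [N.Normal] [IsCoatomic (Subgroup N)] :
    (frattini N).map N.subtype ≤ frattini G := by
  set P := (frattini N).map N.subtype
  have hPN : P ≤ N := map_subtype_le _
  refine le_iInf₂ fun M hM ↦ ?_
  by_contra hPM
  have hMP : M ⊔ P = ⊤ := hM.2 _ (left_lt_sup.mpr hPM)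
  have hgen : (N ⊓ M).subgroupOf N ⊔ frattini N = ⊤ := by
    apply map_injective N.subtype_injective
    rw [Subgroup.map_sup, subgroupOf_map_subtype, ← MonoidHom.range_eq_map, range_subtype]
    refine le_antisymm (sup_le inf_le_right hPN) ?_
    simpa [hMP] using inf_sup_le_inf_sup_of_normal (M := M) hPN
  have hNM : N ≤ M := by
    simpa using subgroupOf_eq_top.mp (frattini_nongenerating hgen)
  exact hPM (hPN.trans hNM)

theorem map_subtype_frattini_mono [Finite G] {A B : Subgroup G} (hAB : A ≤ B)
    [(A.subgroupOf B).Normal] :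
    (frattini A).map A.subtype ≤ (frattini B).map B.subtype :=
  calc (frattini A).map A.subtype
      = ((frattini (A.subgroupOf B)).map (A.subgroupOf B).subtype).map B.subtype := by
        rw [← map_frattini_mulEquiv (subgroupOfEquivOfLe hAB), map_map, map_map]
        rfl
    _ ≤ (frattini B).map B.subtype := map_mono (map_subtype_frattini_le _)

theorem IsSubnormal.map_subtype_frattini_le [Finite G] {Q : Subgroup G}
    (hQ : _root_.IsSubnormal Q) :
    (frattini Q).map Q.subtype ≤ frattini G := by
  obtain ⟨n, c, rfl, hn, hc⟩ := hQ
  have hchain (i : ℕ) :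
      (frattini (c 0)).map (c 0).subtype ≤ (frattini (c i)).map (c i).subtype := by
    induction i with
    | zero => exact le_rfl
    | succ i ih =>
      have := (hc i).2
      exact ih.trans (map_subtype_frattini_mono (hc i).1)
  have htop : (frattini (⊤ : Subgroup G)).map (⊤ : Subgroup G).subtype = frattini G :=
    map_frattini_mulEquiv topEquiv
  have := hchain n
  rwa [hn, htop] at this

theorem IsSubnormal.frattini_eq_bot [Finite G] (hG : frattini G = ⊥) {Q : Subgroup G}
    (hQ : _root_.IsSubnormal Q) : frattini Q = ⊥ :=
  (map_eq_bot_iff_of_injective _ Q.subtype_injective).mp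
    (le_bot_iff.mp (hG ▸ hQ.map_subtype_frattini_le))

end Frattini

namespace IsQuasiSimple

variable {Q : Type*} [Group Q]

theorem center_le_frattini (hQ : IsQuasiSimple Q) : center Q ≤ frattini Q := by
  simpa [hQ.1] using center_inf_commutator_le_frattini (G := Q)

theorem isSimpleGroup_of_center_eq_bot (hQ : IsQuasiSimple Q) (hZ : center Q = ⊥) :
    IsSimpleGroup Q :=
  have := hQ.2
  ((QuotientGroup.quotientMulEquivOfEq hZ).trans QuotientGroup.quotientBot).symm.isSimpleGroup

end IsQuasiSimple

/-- In a finite group with trivial Frattini subgroup, every subnormal quasi-simple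
subgroup is simple; in particular its centre is trivial. -/
theorem stmt_7 (G : Type*) [Group G] [Finite G] (hG : frattini G = ⊥)
    (Q : Subgroup G) (hsub : _root_.IsSubnormal Q) (hqs : IsQuasiSimple Q) :
    IsSimpleGroup Q ∧ Subgroup.center Q = ⊥ := by
  have hZ : center Q = ⊥ := le_bot_iff.mp (hsub.frattini_eq_bot hG ▸ hqs.center_le_frattini)
  exact ⟨hqs.isSimpleGroup_of_center_eq_bot hZ, hZ⟩
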